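/- Every term T generated by the model-generation rule from Φₙ satisfies, for each 1 ≤ i ≤ n, either {uᵢ, eᵢ} ⊆ T or {ūᵢ, ēᵢ} ⊆ T; consequently T contains exactly n universal literals and there is exactly one complete assignment to the universal variables u₁,…,uₙ that agrees with T. -/
import Mathlib


/-!
Framework for prenex QCNF: variables are natural numbers; a quantifier prefix is
given by `ex : Var → Bool` (`ex v = true` iff variable `v` is existential), and
the prefix order on variables (hence on literals) is `<` on ℕ.
-/

abbrev Var := ℕ

/-- A literal: a variable together with a polarity (`pos = true` for `x`, `false` for `x̄`). -/
structure Lit where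
  var : Var
  pos : Bool
deriving DecidableEq

/-- The complementary literal. -/
def Lit.neg (l : Lit) : Lit := ⟨l.var, !l.pos⟩

/-- Clauses (disjunctions) and terms (conjunctions) are finite sets of literals. -/
abbrev Clause := Finset Lit
abbrev Term := Finset Lit

/-- A set of literals contains no complementary pair. -/
def LitSetOk (C : Finset Lit) : Prop := ∀ l ∈ C, l.neg ∉ C

instance (C : Finset Lit) : Decidable (LitSetOk C) :=
  inferInstanceAs (Decidable (∀ l ∈ C, l.neg ∉ C))

/-- The resOf on pivot literal `p` (used both for clauses and for terms). -/
def resOf (p : Lit) (A B : Finset Lit) : Finset Lit := A.erase p ∪ B.erase p.neg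

/-- Resolution of `A` (containing `p`) with `B` (containing `p.neg`) is defined: the
union of the side literals contains no complementary pair and neither `p` nor `p.neg`. -/
def ResOk (p : Lit) (A B : Finset Lit) : Prop :=
  p ∈ A ∧ p.neg ∈ B ∧ p ∉ resOf p A B ∧ p.neg ∉ resOf p A B ∧
    LitSetOk (resOf p A B)

instance (p : Lit) (A B : Finset Lit) : Decidable (ResOk p A B) :=
  inferInstanceAs (Decidable (p ∈ A ∧ p.neg ∈ B ∧ p ∉ resOf p A B ∧
    p.neg ∉ resOf p A B ∧ LitSetOk (resOf p A B)))

/-- ∀-reduction: `C'` results from `C` by removing every universal literal `l` such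
that no existential literal `k ∈ C` satisfies `l < k`. -/
def IsForallReduct (ex : Var → Bool) (C C' : Clause) : Prop :=
  ∀ l : Lit, l ∈ C' ↔ l ∈ C ∧ (ex l.var = true ∨ ∃ k ∈ C, ex k.var = true ∧ l.var < k.var)

/-- QU-resolution proofs of a clause from the matrix `φ` under the prefix `ex`:
every clause is in `φ`, or a QU-resOf of two earlier clauses (the pivot may be
universal), or results from an earlier clause by ∀-reduction. -/
inductive QUProof (ex : Var → Bool) (φ : Finset Clause) : Clause → Prop
  | ax {C : Clause} : C ∈ φ → QUProof ex φ C
  | res {A B : Clause} {p : Lit} : QUProof ex φ A → QUProof ex φ B → ResOk p A B →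
      QUProof ex φ (resOf p A B)
  | red {C C' : Clause} : QUProof ex φ C → IsForallReduct ex C C' → QUProof ex φ C'

/-- ∃-reduction: `T'` results from `T` by removing every existential literal `l` such
that no universal literal `k ∈ T` satisfies `l < k`. -/
def IsExistsReduct (ex : Var → Bool) (T T' : Term) : Prop :=
  ∀ l : Lit, l ∈ T' ↔ l ∈ T ∧ (ex l.var = false ∨ ∃ k ∈ T, ex k.var = false ∧ l.var < k.var)

/-- Model generation rule: `T` is generated from the matrix `φ` if every clause of `φ`
contains a literal belonging to `T`. -/
def ModelGen (φ : Finset Clause) (T : Term) : Prop := ∀ C ∈ φ, ∃ l ∈ C, l ∈ T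

/-- `π` is a term-resolution proof of the term `T` from the QCNF with prefix `ex` and
matrix `φ`: a finite sequence of terms ending in `T`, each generated by model
generation or obtained from earlier terms by ∃-reduction or term-resolution. -/
def IsTermResProof (ex : Var → Bool) (φ : Finset Clause) (π : List Term) (T : Term) : Prop :=
  π ≠ [] ∧ π.getLast? = some T ∧
    ∀ i : Fin π.length, LitSetOk (π.get i) ∧
      (ModelGen φ (π.get i) ∨
        (∃ j : Fin π.length, j < i ∧ IsExistsReduct ex (π.get j) (π.get i)) ∨
        (∃ j k : Fin π.length, j < i ∧ k < i ∧ ∃ p : Lit,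
          ResOk p (π.get j) (π.get k) ∧ π.get i = resOf p (π.get j) (π.get k)))

/-- Value of a literal under a total assignment. -/
def evalLit (σ : Var → Bool) (l : Lit) : Bool := if l.pos then σ l.var else !σ l.var

/-- A strategy assigns to each (existential) variable a Boolean function of the
universal assignment — the semantic counterpart of a propositional formula. -/
abbrev Strategy := Var → (Var → Bool) → Bool

/-- The total assignment induced by a strategy `M` and a universal assignment `τ`. -/
def Strategy.assign (ex : Var → Bool) (M : Strategy) (τ : Var → Bool) : Var → Bool :=
  fun v => if ex v then M v τ else τ v

/-- The definition of each existential variable depends only on the universal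
variables preceding it in the prefix. -/
def WellFormed (ex : Var → Bool) (M : Strategy) : Prop :=
  ∀ e, ex e = true → ∀ τ τ' : Var → Bool,
    (∀ u, ex u = false → u < e → τ u = τ' u) → M e τ = M e τ'

/-- `M` is a model of the QCNF with prefix `ex` and matrix `φ`: it is a well-formed
strategy and `M(φ)` is a tautology. -/
def IsModel (ex : Var → Bool) (φ : Finset Clause) (M : Strategy) : Prop :=
  WellFormed ex M ∧
    ∀ τ : Var → Bool, ∀ C ∈ φ, ∃ l ∈ C, evalLit (Strategy.assign ex M τ) l = true

/-- A term `T` agrees with an assignment `τ` to the universal variables iff there is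
no (universal) literal `l` with `l̄ ∈ T` and `τ(l) = 1`. -/
def Agrees (ex : Var → Bool) (τ : Var → Bool) (T : Term) : Prop :=
  ¬∃ l : Lit, ex l.var = false ∧ l.neg ∈ T ∧ evalLit τ l = true

/-- Edge `a → b` of the binary implication graph of `φ`: the binary clause
`a.neg ∨ b` is in `φ` (a clause `l₁ ∨ l₂` yields the edges `l̄₁ → l₂`, `l̄₂ → l₁`). -/
def ImpEdge (φ : Finset Clause) (a b : Lit) : Prop :=
  a ≠ b ∧ a.neg ≠ b ∧ ({a.neg, b} : Clause) ∈ φ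

/-- The existential literal `l` of the clause `C` is blocked in the matrix `φ`. -/
def BlockedIn (ex : Var → Bool) (φ : Finset Clause) (C : Clause) (l : Lit) : Prop :=
  ex l.var = true ∧ l ∈ C ∧ ∀ D ∈ φ, l.neg ∈ D → ∃ k ∈ C, k.var < l.var ∧ k.neg ∈ D

/-- One step of blocked clause elimination: remove one blocked clause. -/
def BCEStep (ex : Var → Bool) (φ φ' : Finset Clause) : Prop :=
  ∃ C ∈ φ, (∃ l, BlockedIn ex φ C l) ∧ φ' = φ.erase C

/-- The side-condition for eliminating the existential variable `x` from the matrix `φ`. -/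
def VEside (x : Var) (φ : Finset Clause) : Prop :=
  ∀ C ∈ φ, (⟨x, true⟩ : Lit) ∈ C → (∃ k ∈ C, x < k.var) →
    ∀ D ∈ φ, (⟨x, false⟩ : Lit) ∈ D → ∃ z ∈ C, z.var < x ∧ z.neg ∈ D

/-- The set of all defined resolvents on `x` between the clauses of `φ` containing the
literal `x` and those containing `x̄`. -/
def VEresolvents (x : Var) (φ : Finset Clause) : Finset Clause :=
  ((φ ×ˢ φ).filter fun q => ResOk ⟨x, true⟩ q.1 q.2).image
    fun q => resOf ⟨x, true⟩ q.1 q.2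

/-- Variable elimination of `x`: replace all clauses mentioning `x` by all defined
resolvents on `x`. -/
def VEapply (x : Var) (φ : Finset Clause) : Finset Clause :=
  φ.filter (fun C => (⟨x, true⟩ : Lit) ∉ C ∧ (⟨x, false⟩ : Lit) ∉ C) ∪ VEresolvents x φ

/-- The variables of Φₙ (0-indexed): `uᵢ` is variable `2*i`, `eᵢ` is variable `2*i+1`,
so the prefix `∀u₀∃e₀…∀u_{n-1}∃e_{n-1}` is the natural order. -/
def uLit (i : ℕ) (b : Bool) : Lit := ⟨2 * i, b⟩
def eLit (i : ℕ) (b : Bool) : Lit := ⟨2 * i + 1, b⟩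

/-- The prefix of Φₙ: even variables universal, odd variables existential. -/
def phiEx : Var → Bool := fun v => v % 2 == 1

/-- The clause `ūᵢ ∨ eᵢ`. -/
def posClause (i : ℕ) : Clause := {uLit i false, eLit i true}
/-- The clause `uᵢ ∨ ēᵢ`. -/
def negClause (i : ℕ) : Clause := {uLit i true, eLit i false}

/-- The matrix of Φₙ: `⋀_{i<n} (ūᵢ ∨ eᵢ) ∧ (uᵢ ∨ ēᵢ)`. -/
def PhiMatrix (n : ℕ) : Finset Clause :=
  (Finset.range n).biUnion fun i => {posClause i, negClause i}

/-- The set `W` of witnesses for the literal `l` being blocked in the clause `C`. -/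
def witnesses (φ : Finset Clause) (C : Clause) (l : Lit) : Finset Lit :=
  C.filter fun k => k ≠ l ∧ k.var < l.var ∧ ∃ D ∈ φ, k.neg ∈ D ∧ l.neg ∈ D

/-- `φ` with all literals not less than `x` deleted from each clause. -/
def restrictBelow (x : Var) (φ : Finset Clause) : Finset Clause :=
  φ.image fun C => C.filter fun l => l.var < x

theorem stmt2 (n : ℕ) (hn : 1 ≤ n) (T : Term) (hok : LitSetOk T)
    (hvars : ∀ l ∈ T, l.var < 2 * n)
    (hgen : ModelGen (PhiMatrix n) T) :
    (∀ i < n, ({uLit i true, eLit i true} : Finset Lit) ⊆ T ∨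
      ({uLit i false, eLit i false} : Finset Lit) ⊆ T) ∧
    (T.filter fun l => l.var % 2 = 0).card = n ∧
    (∃! τ : Fin n → Bool,
      Agrees phiEx (fun v => if h : v / 2 < n then τ ⟨v / 2, h⟩ else false) T) := by
  have key : ∀ i < n, ({uLit i true, eLit i true} : Finset Lit) ⊆ T ∨
      ({uLit i false, eLit i false} : Finset Lit) ⊆ T := by
    intro i hi
    have hp := hgen (posClause i) (by
      simp [PhiMatrix, Finset.mem_biUnion]
      exact ⟨i, hi, Or.inl rfl⟩)
    have hq := hgen (negClause i) (by
      simp [PhiMatrix, Finset.mem_biUnion]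
      exact ⟨i, hi, Or.inr rfl⟩)
    simp only [posClause, negClause, Finset.mem_insert, Finset.mem_singleton] at hp hq
    obtain ⟨l, hl, hlT⟩ := hp
    obtain ⟨k, hk, hkT⟩ := hq
    rcases hl with rfl | rfl <;> rcases hk with rfl | rfl
    · exact absurd hkT (hok _ hlT)
    · right; intro x hx
      simp only [Finset.mem_insert, Finset.mem_singleton] at hx
      rcases hx with rfl | rfl <;> assumption
    · left; intro x hx
      simp only [Finset.mem_insert, Finset.mem_singleton] at hx
      rcases hx with rfl | rfl <;> assumption
    · exact absurd hkT (hok _ hlT)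
  have hu : ∀ i < n, (uLit i true ∈ T ∧ uLit i false ∉ T) ∨
      (uLit i false ∈ T ∧ uLit i true ∉ T) := by
    intro i hi
    rcases key i hi with h | h
    · have : uLit i true ∈ T := h (by simp)
      exact Or.inl ⟨this, hok _ this⟩
    · have : uLit i false ∈ T := h (by simp)
      exact Or.inr ⟨this, hok _ this⟩
  refine ⟨key, ?_, ?_⟩
  · -- cardinality
    have hset : (T.filter fun l => l.var % 2 = 0) =
        (Finset.range n).image
          (fun i => if uLit i true ∈ T then uLit i true else uLit i false) := by
      ext l
      simp only [Finset.mem_filter, Finset.mem_image, Finset.mem_range]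
      constructor
      · rintro ⟨hlT, heven⟩
        have hlt : l.var < 2 * n := hvars l hlT
        obtain ⟨i, hiv⟩ : ∃ i, l.var = 2 * i := ⟨l.var / 2, by unfold Var at *; omega⟩
        have hin : i < n := by unfold Var at *; omega
        refine ⟨i, hin, ?_⟩
        have hl' : l = uLit i l.pos := by
          cases l; simp_all [uLit]
        cases hb : l.pos
        · rw [hl', hb] at hlT
          have : uLit i true ∉ T := by
            have := hok _ hlT; simpa [uLit, Lit.neg] using this
          rw [if_neg this, hl', hb]
        · rw [hl', hb] at hlT
          rw [if_pos hlT, hl', hb]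
      · rintro ⟨i, hin, rfl⟩
        constructor
        · split
          · assumption
          · rcases hu i hin with ⟨h1, _⟩ | ⟨h1, _⟩
            · exact absurd h1 (by assumption)
            · exact h1
        · split <;> simp [uLit, Nat.mul_mod_right]
    rw [hset, Finset.card_image_of_injOn, Finset.card_range]
    intro a ha b hb hab
    dsimp only at hab
    have hva : (if uLit a true ∈ T then uLit a true else uLit a false).var = 2 * a := by
      split <;> rfl
    have hvb : (if uLit b true ∈ T then uLit b true else uLit b false).var = 2 * b := by
      split <;> rfl
    have h2 := congrArg Lit.var hab
    rw [hva, hvb] at h2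
    unfold Var at *
    omega
  · -- unique agreeing assignment
    refine ⟨fun i => decide (uLit i.val true ∈ T), ?_, ?_⟩
    · rintro ⟨l, hev, hneg, heval⟩
      have heven : l.var % 2 = 0 := by
        have : ¬ l.var % 2 = 1 := by simpa [phiEx] using hev
        unfold Var at *; omega
      have hlt : l.var < 2 * n := by
        have := hvars l.neg hneg; simpa [Lit.neg] using this
      obtain ⟨i, hiv⟩ : ∃ i, l.var = 2 * i := ⟨l.var / 2, by unfold Var at *; omega⟩
      have hin : i < n := by unfold Var at *; omega
      have hdiv : l.var / 2 = i := by unfold Var at *; omega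
      cases l with
      | mk v b =>
        simp only at hiv; subst hiv
        cases b
        · -- l = ⟨2i,false⟩, l.neg = uLit i true ∈ T
          have hmem : uLit i true ∈ T := by simpa [Lit.neg, uLit] using hneg
          simp only [evalLit, uLit] at *
          rw [show (2 * i) / 2 = i from by unfold Var at *; omega] at heval
          simp [hin, hmem] at heval
        · have hmem : uLit i false ∈ T := by simpa [Lit.neg, uLit] using hneg
          have hnot : uLit i true ∉ T := by
            have := hok _ hmem; simpa [uLit, Lit.neg] using this
          simp only [evalLit, uLit] at *
          rw [show (2 * i) / 2 = i from by unfold Var at *; omega] at heval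
          simp [hin, hnot] at heval
    · intro τ hτ
      funext i
      have hdiv : (2 * i.val) / 2 = i.val := by unfold Var at *; omega
      rcases hu i.val i.isLt with ⟨h1, _⟩ | ⟨h1, _⟩
      · rw [decide_eq_true h1]
        by_contra hc
        have hτi : τ i = false := by cases h : τ i <;> simp_all
        refine hτ ⟨⟨2 * i.val, false⟩, ?_, h1, ?_⟩
        · simp [phiEx, Nat.mul_mod_right]
        · simp [evalLit, hdiv, hτi]
      · have hnot : uLit i.val true ∉ T := by
          have := hok _ h1; simpa [uLit, Lit.neg] using this
        rw [decide_eq_false hnot]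
        by_contra hc
        have hτi : τ i = true := by cases h : τ i <;> simp_all
        refine hτ ⟨⟨2 * i.val, true⟩, ?_, h1, ?_⟩
        · simp [phiEx, Nat.mul_mod_right]
        · simp [evalLit, hdiv, hτi]
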